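/- Let b ≥ 2 and m ≥ 1 be integers, let σ be a permutation of {0,1,…,b^m−1} with σ(0) = 0, and let P = {(n/b^m, σ(n)/b^m) : n = 0,1,…,b^m−1}. Then disp(P) ≥ (2/b^m)(1 − 1/b^m); concretely, there is an axis-parallel box of area (2/b^m)(1 − 1/b^m) inside [0,1]² containing no point of P. -/
import Mathlib


/-- The set of areas of axis-parallel half-open boxes `[x1,y1) x [x2,y2)` inside `[0,1]^2`
containing no point of `P`. -/
def emptyBoxAreas (P : Set (ℝ × ℝ)) : Set ℝ :=
  { A | ∃ x₁ y₁ x₂ y₂ : ℝ,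
      0 ≤ x₁ ∧ x₁ ≤ y₁ ∧ y₁ ≤ 1 ∧ 0 ≤ x₂ ∧ x₂ ≤ y₂ ∧ y₂ ≤ 1 ∧
      (∀ p ∈ P, p ∉ Set.Ico x₁ y₁ ×ˢ Set.Ico x₂ y₂) ∧
      A = (y₁ - x₁) * (y₂ - x₂) }

/-- The dispersion of a point set `P ⊆ [0,1]^2`: the supremum of areas of empty
axis-parallel boxes. -/
noncomputable def disp (P : Set (ℝ × ℝ)) : ℝ := sSup (emptyBoxAreas P)

/-- Trivial lower bound: any point set of the form `{(n/b^m, σ(n)/b^m)}` with `σ` a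
permutation of `{0,…,b^m−1}` fixing `0` has dispersion at least `(2/b^m)(1 − 1/b^m)`;
concretely, there is an axis-parallel box of this area in `[0,1]²` containing no point
of the set. -/
theorem disp_perm_net_ge (b m : ℕ) (hb : 2 ≤ b) (hm : 1 ≤ m) (σ : ℕ → ℕ)
    (hσ : Set.BijOn σ (Set.Iio (b ^ m)) (Set.Iio (b ^ m))) (hσ0 : σ 0 = 0)
    (P : Set (ℝ × ℝ))
    (hP : P = {p : ℝ × ℝ | ∃ n < b ^ m, p = ((n : ℝ) / (b : ℝ) ^ m, (σ n : ℝ) / (b : ℝ) ^ m)}) :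
    disp P ≥ 2 / (b : ℝ) ^ m * (1 - 1 / (b : ℝ) ^ m) ∧
    ∃ x₁ y₁ x₂ y₂ : ℝ, 0 ≤ x₁ ∧ x₁ ≤ y₁ ∧ y₁ ≤ 1 ∧ 0 ≤ x₂ ∧ x₂ ≤ y₂ ∧ y₂ ≤ 1 ∧
      (y₁ - x₁) * (y₂ - x₂) = 2 / (b : ℝ) ^ m * (1 - 1 / (b : ℝ) ^ m) ∧
      ∀ p ∈ P, p ∉ Set.Ioo x₁ y₁ ×ˢ Set.Ioo x₂ y₂ := by
  have hN2 : 2 ≤ b ^ m := le_trans hb (Nat.le_self_pow (by omega) b)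
  set N := b ^ m with hNdef
  set B : ℝ := (b : ℝ) ^ m with hBdef
  have hBN : B = (N : ℝ) := by rw [hBdef, hNdef]; push_cast; ring
  have hB2 : (2:ℝ) ≤ B := by rw [hBN]; exact_mod_cast hN2
  have hB0 : (0:ℝ) < B := by linarith
  have h1B : (0:ℝ) < 1/B := by positivity
  have h1B1 : 1/B ≤ 1 := by rw [div_le_one hB0]; linarith
  obtain ⟨n₁, hn₁N, hσn₁⟩ := hσ.surjOn (show N - 1 ∈ Set.Iio N from by
    simp only [Set.mem_Iio]; omega)
  simp only [Set.mem_Iio] at hn₁N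
  have hn₁1 : 1 ≤ n₁ := by
    rcases Nat.eq_zero_or_pos n₁ with h | h
    · exfalso; rw [h, hσ0] at hσn₁; omega
    · exact h
  have key : ∀ n : ℕ, ((n₁:ℝ) - 1)/B < (n:ℝ)/B → (n:ℝ)/B < ((n₁:ℝ)+1)/B → n = n₁ := by
    intro n h1 h2
    rw [div_lt_div_iff_of_pos_right hB0] at h1 h2
    have h1' : n₁ < n + 1 := by exact_mod_cast (by linarith : (n₁:ℝ) < (n:ℝ) + 1)
    have h2' : n < n₁ + 1 := by exact_mod_cast (by linarith : (n:ℝ) < (n₁:ℝ) + 1)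
    omega
  have hσval : ((σ n₁ : ℝ)) / B = 1 - 1/B := by
    rw [hσn₁]
    have h1N : ((N - 1 : ℕ) : ℝ) = (N : ℝ) - 1 := by
      have : 1 ≤ N := by omega
      push_cast [this]; ring
    rw [h1N, hBN]
    field_simp
  have hn₁le : ((n₁:ℝ) + 1)/B ≤ 1 := by
    rw [div_le_one hB0, hBN]
    exact_mod_cast Nat.succ_le_of_lt hn₁N
  have hn₁ge : (0:ℝ) ≤ ((n₁:ℝ) - 1)/B := by
    apply div_nonneg _ hB0.le
    have : (1:ℝ) ≤ (n₁:ℝ) := by exact_mod_cast hn₁1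
    linarith
  constructor
  · -- dispersion bound
    have hbdd : BddAbove (emptyBoxAreas P) := by
      refine ⟨1, ?_⟩
      rintro A ⟨x₁, y₁, x₂, y₂, h0, h1, h2, h3, h4, h5, -, rfl⟩
      nlinarith
    rw [disp, ge_iff_le]
    refine le_of_forall_pos_le_add ?_
    intro ε hε
    set δ : ℝ := min ε (2/B) with hδdef
    have hδ0 : 0 < δ := lt_min hε (by positivity)
    have hδ2B : δ ≤ 2/B := min_le_right _ _
    have hδε : δ ≤ ε := min_le_left _ _
    have hmem : (2/B - δ) * (1 - 1/B) ∈ emptyBoxAreas P := by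
      refine ⟨((n₁:ℝ) - 1)/B + δ, ((n₁:ℝ) + 1)/B, 0, 1 - 1/B,
        by linarith, ?_, hn₁le, le_refl 0, by linarith, by linarith, ?_, ?_⟩
      · have h2B : ((n₁:ℝ) + 1)/B - ((n₁:ℝ) - 1)/B = 2/B := by ring
        linarith
      · intro p hp hmem
        rw [hP] at hp
        obtain ⟨n, hn, rfl⟩ := hp
        obtain ⟨hx, hy⟩ := hmem
        simp only [Set.mem_Ico] at hx hy
        have hnn₁ : n = n₁ := key n (by linarith [hx.1]) hx.2
        rw [hnn₁, hσval] at hy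
        linarith [hy.2]
      · ring
    have hle : (2/B - δ) * (1 - 1/B) ≤ sSup (emptyBoxAreas P) := le_csSup hbdd hmem
    nlinarith
  · -- explicit open box
    refine ⟨((n₁:ℝ) - 1)/B, ((n₁:ℝ) + 1)/B, 0, 1 - 1/B,
      hn₁ge, ?_, hn₁le, le_refl 0, by linarith, by linarith, ?_, ?_⟩
    · have hB0' : (0:ℝ) < 2/B := by positivity
      have h2B : ((n₁:ℝ) + 1)/B - ((n₁:ℝ) - 1)/B = 2/B := by ring
      linarith
    · ring
    · intro p hp hmem
      rw [hP] at hp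
      obtain ⟨n, hn, rfl⟩ := hp
      obtain ⟨hx, hy⟩ := hmem
      simp only [Set.mem_Ioo] at hx hy
      have hnn₁ : n = n₁ := key n hx.1 hx.2
      rw [hnn₁, hσval] at hy
      linarith [hy.2]
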